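/- Let f : X → Y be a continuous map between topological spaces, where Y carries a local convexity structure. If f is locally convex, then the induced map f# : X^f → Y is locally convex. -/

import Mathlib

universe u v w

/-- A convexity-space structure on an (open) subset `U` of a topological space `Y`,
given by a map `C` assigning to points `x, y ∈ U` a subset `C x y ⊆ U`:
`U` with its subspace topology is Hausdorff, `C` is continuous (as a map into the
power set of `U` with the topology generated by `{A | A ⊆ W}`, `W` relatively open),
(C1) each `C x y` is convex, (C2) each `C x y` is minimal among the connected subsets of
`U` containing `x` and `y`, and (C3) `U` has a basis of convex (relatively) open sets.
Since `U` is required to be open in `Y`, relatively open subsets of `U` are exactly the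
open subsets of `Y` contained in `U`. -/
structure IsConvexitySpaceOn {Y : Type*} [TopologicalSpace Y] (U : Set Y)
    (C : Y → Y → Set Y) : Prop where
  /-- The carrier is open in the ambient space. -/
  isOpen : IsOpen U
  /-- `U` is Hausdorff in its subspace topology. -/
  t2 : ∀ x ∈ U, ∀ y ∈ U, x ≠ y →
    ∃ V W : Set Y, IsOpen V ∧ IsOpen W ∧ x ∈ V ∧ y ∈ W ∧ V ∩ W ∩ U = ∅
  /-- `C x y` is a subset of `U` for `x, y ∈ U`. -/
  segment_subset : ∀ x ∈ U, ∀ y ∈ U, C x y ⊆ U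
  /-- `C x y` contains `x`. -/
  mem_left : ∀ x ∈ U, ∀ y ∈ U, x ∈ C x y
  /-- `C x y` contains `y`. -/
  mem_right : ∀ x ∈ U, ∀ y ∈ U, y ∈ C x y
  /-- `C x y` is connected. -/
  preconnected : ∀ x ∈ U, ∀ y ∈ U, IsPreconnected (C x y)
  /-- (C1): `C x y` is convex. -/
  convex : ∀ x ∈ U, ∀ y ∈ U, ∀ u ∈ C x y, ∀ v ∈ C x y, C u v ⊆ C x y
  /-- (C2): `C x y` is minimal among the connected subsets of `U` containing `x, y`. -/
  minimal : ∀ x ∈ U, ∀ y ∈ U, ∀ A : Set Y, A ⊆ C x y → x ∈ A → y ∈ A →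
    IsPreconnected A → A = C x y
  /-- Continuity of `(x, y) ↦ C x y`. -/
  continuity : ∀ x ∈ U, ∀ y ∈ U, ∀ W : Set Y, IsOpen W → C x y ⊆ W →
    ∃ V V' : Set Y, IsOpen V ∧ IsOpen V' ∧ x ∈ V ∧ y ∈ V' ∧
      ∀ x' ∈ V ∩ U, ∀ y' ∈ V' ∩ U, C x' y' ⊆ W
  /-- (C3): `U` has a basis of convex open sets. -/
  basis : ∀ x ∈ U, ∀ W : Set Y, IsOpen W → x ∈ W →
    ∃ V : Set Y, IsOpen V ∧ x ∈ V ∧ V ⊆ W ∩ U ∧ ∀ u ∈ V, ∀ v ∈ V, C u v ⊆ V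

/-- A *local convexity structure* on a topological space `Y`: an open cover `atlas` of `Y`
by convexity spaces (chart `U` carrying the convexity map `seg U`) such that every convex
open subspace of a chart is again a chart, with the restricted convexity map. -/
structure LocalConvexityStructure (Y : Type*) [TopologicalSpace Y] where
  /-- The charts. -/
  atlas : Set (Set Y)
  /-- The convexity map of each chart: `seg U x y` is the minimal connected subset of the
  chart `U` joining `x` and `y`. -/
  seg : Set Y → Y → Y → Set Y
  /-- The charts cover `Y`. -/
  covers : ∀ y : Y, ∃ U ∈ atlas, y ∈ U
  /-- Each chart is a convexity space. -/
  convexity : ∀ U ∈ atlas, IsConvexitySpaceOn U (seg U)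
  /-- Every convex open subspace of a chart is a chart, with the restricted map. -/
  subchart : ∀ U ∈ atlas, ∀ V : Set Y, V ⊆ U → IsOpen V →
    (∀ u ∈ V, ∀ v ∈ V, seg U u v ⊆ V) →
    V ∈ atlas ∧ ∀ u ∈ V, ∀ v ∈ V, seg V u v = seg U u v

/-- A subset `A ⊆ Y` is convex (w.r.t. a local convexity structure) if `A ∩ U` is convex
in `U` for every chart `U`. -/
def LocalConvexityStructure.IsConvexSet {Y : Type*} [TopologicalSpace Y]
    (𝒱 : LocalConvexityStructure Y) (A : Set Y) : Prop :=
  ∀ U ∈ 𝒱.atlas, ∀ u ∈ A ∩ U, ∀ v ∈ A ∩ U, 𝒱.seg U u v ⊆ A ∩ U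

/-- The convex hull of `A ⊆ Y`: the smallest convex set containing `A`. -/
def LocalConvexityStructure.hull {Y : Type*} [TopologicalSpace Y]
    (𝒱 : LocalConvexityStructure Y) (A : Set Y) : Set Y :=
  ⋂₀ {B : Set Y | A ⊆ B ∧ 𝒱.IsConvexSet B}

/-- `U` is a member of `𝒱_e` with target chart `V`: `U` is an open subset of `Z` mapped by
`e` homeomorphically (injectively and relatively openly; `e` is continuous in context)
onto a convex subspace of the chart `V` of `Y`. -/
def IsEtaleChartTo {Z Y : Type*} [TopologicalSpace Z] [TopologicalSpace Y]
    (𝒱 : LocalConvexityStructure Y) (e : Z → Y) (U : Set Z) (V : Set Y) : Prop :=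
  IsOpen U ∧ Set.InjOn e U ∧
  (∀ W : Set Z, W ⊆ U → IsOpen W → ∃ O : Set Y, IsOpen O ∧ e '' W = O ∩ e '' U) ∧
  V ∈ 𝒱.atlas ∧ e '' U ⊆ V ∧
  ∀ p ∈ e '' U, ∀ q ∈ e '' U, 𝒱.seg V p q ⊆ e '' U

/-- `U ∈ 𝒱_e`: `U` is an open subset of `Z` mapped by `e` homeomorphically onto a convex
subspace of some chart of `Y`. -/
def IsEtaleChart {Z Y : Type*} [TopologicalSpace Z] [TopologicalSpace Y]
    (𝒱 : LocalConvexityStructure Y) (e : Z → Y) (U : Set Z) : Prop :=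
  ∃ V : Set Y, IsEtaleChartTo 𝒱 e U V

/-- A continuous map `e : Z → Y` from a connected space `Z` is *étale* (w.r.t. a local
convexity structure on `Y`) if `e` is closed and the charts `𝒱_e` cover `Z`. -/
structure IsEtale {Z Y : Type*} [TopologicalSpace Z] [TopologicalSpace Y]
    (𝒱 : LocalConvexityStructure Y) (e : Z → Y) : Prop where
  continuous : Continuous e
  connectedSpace : ConnectedSpace Z
  isClosedMap : IsClosedMap e
  charts_cover : ∀ z : Z, ∃ U : Set Z, IsEtaleChart 𝒱 e U ∧ z ∈ U

/-- `e : Z → Y` is *generated* by `F ⊆ Z` if there is no proper closed connected subset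
`A ⊊ Z` containing `F` such that `e(U ∩ A)` is convex for all `U ∈ 𝒱_e`. -/
def Generates {Z Y : Type*} [TopologicalSpace Z] [TopologicalSpace Y]
    (𝒱 : LocalConvexityStructure Y) (e : Z → Y) (F : Set Z) : Prop :=
  ¬ ∃ A : Set Z, A ≠ Set.univ ∧ IsClosed A ∧ IsPreconnected A ∧ F ⊆ A ∧
      ∀ U : Set Z, IsEtaleChart 𝒱 e U → 𝒱.IsConvexSet (e '' (U ∩ A))

/-- A *geodesic manifold*: a Hausdorff space `Y` with a local convexity structure such that
(G1) the closure of the convex hull of every finite set is compact, and (G2) for every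
étale map `e : Z → Y` with `Z` compact that is generated by a two-element set
`{x, y} ⊆ Z`, every connected subset of `Z` containing `x` and `y` is all of `Z`. -/
structure IsGeodesicManifold {Y : Type v} [TopologicalSpace Y]
    (𝒱 : LocalConvexityStructure Y) : Prop where
  t2 : T2Space Y
  /-- (G1). -/
  hull_compact : ∀ F : Set Y, F.Finite → IsCompact (closure (𝒱.hull F))
  /-- (G2). -/
  geodesic_minimal : ∀ (Z : Type v) [TopologicalSpace Z] (e : Z → Y),
    CompactSpace Z → IsEtale 𝒱 e → ∀ x y : Z, Generates 𝒱 e {x, y} →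
    ∀ A : Set Z, IsPreconnected A → x ∈ A → y ∈ A → A = Set.univ

/-- Star-finiteness of the convexity space `(U, C)` (relative to the ambient space `Y`,
`U` being open in `Y`): every closed star in `U` has a finite end set.  A star with center
`x ∈ U` and end set `E ⊆ U \ {x}` is the union `S = ⋃ z ∈ E, C x z` where the segments
`C x z` pairwise intersect exactly in `{x}` and the subspace topology of `S` is the finest
topology making all inclusions `C x z ↪ S` continuous (i.e. every `Z ⊆ S` whose trace on
each `C x z` is closed in `C x z` is closed in `S`); the star is closed if `S` is closed
in `U`. -/
def StarFiniteOn {Y : Type*} [TopologicalSpace Y] (U : Set Y) (C : Y → Y → Set Y) : Prop :=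
  ∀ x ∈ U, ∀ E : Set Y, E ⊆ U \ {x} →
    (∀ z ∈ E, ∀ z' ∈ E, z ≠ z' → C x z ∩ C x z' = {x}) →
    (∀ Z : Set Y, Z ⊆ (⋃ z ∈ E, C x z) →
      (∀ z ∈ E, ∃ F : Set Y, IsClosed F ∧ Z ∩ C x z = F ∩ C x z) →
      ∃ F : Set Y, IsClosed F ∧ Z = F ∩ (⋃ z ∈ E, C x z)) →
    (∃ F : Set Y, IsClosed F ∧ (⋃ z ∈ E, C x z) = F ∩ U) →
    E.Finite

/-- A *geodesic q-manifold*: a geodesic manifold all of whose charts are star-finite and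
regular (as subspaces). -/
structure IsGeodesicQManifold {Y : Type v} [TopologicalSpace Y]
    (𝒱 : LocalConvexityStructure Y) extends IsGeodesicManifold 𝒱 : Prop where
  starFinite : ∀ U ∈ 𝒱.atlas, StarFiniteOn U (𝒱.seg U)
  regular : ∀ U ∈ 𝒱.atlas, RegularSpace U

/-- A *geodesic* in `Y` joining `p` and `q`: an étale map `e : Z → Y` with `Z` compact,
generated by a two-element set `{x, y} ⊆ Z`, whose end points are `e x = p` and
`e y = q`. -/
structure GeodesicConnecting {Y : Type v} [TopologicalSpace Y]
    (𝒱 : LocalConvexityStructure Y) (p q : Y) : Type (v + 1) where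
  Z : Type v
  [ts : TopologicalSpace Z]
  e : Z → Y
  x : Z
  y : Z
  compact : CompactSpace Z
  etale : IsEtale 𝒱 e
  generates : Generates 𝒱 e {x, y}
  endpoint_left : e x = p
  endpoint_right : e y = q

/-- A subset `A ⊆ Y` is *weakly convex* if any two of its points are the end points of a
geodesic in `Y`. -/
def LocalConvexityStructure.WeaklyConvex {Y : Type v} [TopologicalSpace Y]
    (𝒱 : LocalConvexityStructure Y) (A : Set Y) : Prop :=
  ∀ p ∈ A, ∀ q ∈ A, Nonempty (GeodesicConnecting 𝒱 p q)

/-- A continuous map `f : X → Y` is *locally open onto its image* if every `x ∈ X` has an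
open neighbourhood `U` such that the induced map `U → f(U)` is open, where `f(U)` carries
the subspace topology from `Y` (equivalently: the image of every open `W ⊆ U` is
relatively open in `f(U)`). -/
def IsLocallyOpenOntoImage {X Y : Type*} [TopologicalSpace X] [TopologicalSpace Y]
    (f : X → Y) : Prop :=
  ∀ x : X, ∃ U : Set X, IsOpen U ∧ x ∈ U ∧
    ∀ W : Set X, W ⊆ U → IsOpen W → ∃ O : Set Y, IsOpen O ∧ f '' W = O ∩ f '' U

/-- The equivalence relation on `X` identifying `x` and `x'` iff `f x = f x'` and the image
filters `f(𝓝 x)` and `f(𝓝 x')` coincide. -/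
def nhdsSetoid {X Y : Type*} [TopologicalSpace X] (f : X → Y) : Setoid X where
  r a b := f a = f b ∧ Filter.map f (nhds a) = Filter.map f (nhds b)
  iseqv := ⟨fun _ => ⟨rfl, rfl⟩, fun h => ⟨h.1.symm, h.2.symm⟩,
    fun h h' => ⟨h.1.trans h'.1, h.2.trans h'.2⟩⟩

/-- The space `X^f`: the quotient of `X` by the relation `x ~ x'` iff `f x = f x'` and
`f(𝓝 x) = f(𝓝 x')`, endowed with the quotient topology. -/
abbrev SpaceXf {X Y : Type*} [TopologicalSpace X] (f : X → Y) : Type _ :=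
  Quotient (nhdsSetoid f)

/-- The canonical quotient map `q^f : X → X^f`. -/
def qMap {X Y : Type*} [TopologicalSpace X] (f : X → Y) : X → SpaceXf f :=
  Quotient.mk (nhdsSetoid f)

/-- The induced map `f# : X^f → Y` with `f = f# ∘ q^f`. -/
def fSharp {X Y : Type*} [TopologicalSpace X] (f : X → Y) : SpaceXf f → Y :=
  Quotient.lift f fun _ _ h => h.1

/-- A continuous map `f : X → Y` into a space with a local convexity structure `𝒱` is
*locally convex* if every `x ∈ X` has an open neighbourhood `U` such that the induced map
`U → f(U)` is open and `f(U)` is a convex subspace of some chart `V ∈ 𝒱`. -/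
def IsLocallyConvexMap {X Y : Type*} [TopologicalSpace X] [TopologicalSpace Y]
    (𝒱 : LocalConvexityStructure Y) (f : X → Y) : Prop :=
  ∀ x : X, ∃ U : Set X, IsOpen U ∧ x ∈ U ∧
    (∀ W : Set X, W ⊆ U → IsOpen W → ∃ O : Set Y, IsOpen O ∧ f '' W = O ∩ f '' U) ∧
    ∃ V ∈ 𝒱.atlas, f '' U ⊆ V ∧ ∀ p ∈ f '' U, ∀ q ∈ f '' U, 𝒱.seg V p q ⊆ f '' U

/-!
On an open set `U` on which `f` is open onto its image, the image filter `f(𝓝 u)` is the trace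
of `𝓝 (f u)` on `f(U)`, so it only depends on the germ of `f(U)` at `f u`. Hence if `z ~ u ∈ U`
and `U'` is such a set around `z`, then `f(U)` and `f(U')` have the same germ at `f z`, and every
point of `U'` near `z` is equivalent to a point of `U`. So the saturation of `U` is open, i.e.
`q^f(U)` is open in `X^f`; since `f#(q^f(U)) = f(U)`, openness onto the image and convexity pass
from `U` to `q^f(U)`.
-/

open Filter Topology Set

section

variable {X Y : Type*} [TopologicalSpace X] {f : X → Y}

theorem qMap_eq_qMap_iff {x x' : X} :
    qMap f x = qMap f x' ↔ f x = f x' ∧ map f (𝓝 x) = map f (𝓝 x') :=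
  Quotient.eq

theorem fSharp_image_qMap_image (U : Set X) : fSharp f '' (qMap f '' U) = f '' U :=
  image_image _ _ _

variable [TopologicalSpace Y]

def IsOpenOntoImageOn (f : X → Y) (U : Set X) : Prop :=
  ∀ W : Set X, W ⊆ U → IsOpen W → ∃ O : Set Y, IsOpen O ∧ f '' W = O ∩ f '' U

theorem IsLocallyConvexMap.isLocallyOpenOntoImage {𝒱 : LocalConvexityStructure Y}
    (h : IsLocallyConvexMap 𝒱 f) : IsLocallyOpenOntoImage f := fun x =>
  let ⟨U, hU, hxU, hfU, _⟩ := h x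
  ⟨U, hU, hxU, hfU⟩

theorem map_nhds_eq_nhdsWithin_image (hf : Continuous f) {U : Set X} (hU : IsOpen U)
    (hfU : IsOpenOntoImageOn f U) {u : X} (hu : u ∈ U) :
    map f (𝓝 u) = 𝓝[f '' U] (f u) := by
  refine le_antisymm (le_inf hf.continuousAt ?_) fun S hS => ?_
  · exact le_principal_iff.2 (image_mem_map (hU.mem_nhds hu))
  · obtain ⟨W, hWS, hW, huW⟩ := mem_nhds_iff.1 (mem_map.1 hS)
    obtain ⟨O, hO, hOW⟩ := hfU (W ∩ U) inter_subset_right (hW.inter hU)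
    have hfu : f u ∈ O := (hOW ▸ mem_image_of_mem f ⟨huW, hu⟩ : f u ∈ O ∩ f '' U).1
    refine mem_nhdsWithin.2 ⟨O, hO, hfu, ?_⟩
    rw [← hOW]
    rintro _ ⟨w, ⟨hw, -⟩, rfl⟩
    exact hWS hw

theorem isOpen_qMap_image (hf : Continuous f) (hloc : IsLocallyOpenOntoImage f)
    {U : Set X} (hU : IsOpen U) (hfU : IsOpenOntoImageOn f U) :
    IsOpen (qMap f '' U) := by
  show IsOpen (qMap f ⁻¹' (qMap f '' U))
  refine isOpen_iff_mem_nhds.2 fun z ⟨u, hu, huz⟩ => ?_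
  obtain ⟨hfuz, hnhds⟩ := qMap_eq_qMap_iff.1 huz
  obtain ⟨U', hU', hzU', hfU'⟩ := hloc z
  have hgerm : f '' U =ᶠ[𝓝 (f z)] f '' U' := by
    rw [← nhdsWithin_eq_iff_eventuallyEq, ← map_nhds_eq_nhdsWithin_image hf hU' hfU' hzU',
      ← hfuz, ← map_nhds_eq_nhdsWithin_image hf hU hfU hu, hnhds]
  filter_upwards [hU'.mem_nhds hzU', hf.continuousAt.eventually hgerm.eventuallyEq_nhds]
    with w hwU' hw
  obtain ⟨v, hv, hvw⟩ : f w ∈ f '' U := hw.self_of_nhds.mpr (mem_image_of_mem f hwU')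
  refine ⟨v, hv, qMap_eq_qMap_iff.2 ⟨hvw, ?_⟩⟩
  rw [map_nhds_eq_nhdsWithin_image hf hU hfU hv, map_nhds_eq_nhdsWithin_image hf hU' hfU' hwU',
    hvw, nhdsWithin_eq_iff_eventuallyEq.2 hw]

theorem IsOpenOntoImageOn.fSharp_qMap_image {U : Set X} (hU : IsOpen U)
    (hfU : IsOpenOntoImageOn f U) :
    IsOpenOntoImageOn (fSharp f) (qMap f '' U) := by
  intro W hWU hW
  obtain ⟨O, hO, hOW⟩ := hfU (qMap f ⁻¹' W ∩ U) inter_subset_right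
    ((hW.preimage continuous_quotient_mk').inter hU)
  refine ⟨O, hO, ?_⟩
  rw [fSharp_image_qMap_image, ← hOW, ← fSharp_image_qMap_image (f := f), image_preimage_inter,
    inter_eq_left.2 hWU]

end

/-- Proposition 7: Let `f : X → Y` be a continuous map between
topological spaces, where `Y` carries a local convexity structure.  If `f` is locally
convex, then the induced map `f# : X^f → Y` is locally convex. -/
theorem stmt_11 {X Y : Type*} [TopologicalSpace X] [TopologicalSpace Y]
    (𝒱 : LocalConvexityStructure Y) (f : X → Y) (hf : Continuous f)
    (h : IsLocallyConvexMap 𝒱 f) :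
    IsLocallyConvexMap 𝒱 (fSharp f) := by
  rintro ⟨x⟩
  obtain ⟨U, hU, hxU, hfU, V, hV, hUV, hconv⟩ := h x
  refine ⟨qMap f '' U, isOpen_qMap_image hf h.isLocallyOpenOntoImage hU hfU,
    mem_image_of_mem _ hxU, IsOpenOntoImageOn.fSharp_qMap_image hU hfU, V, hV, ?_⟩
  rw [fSharp_image_qMap_image]
  exact ⟨hUV, hconv⟩
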